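/- The R-module Hom_R(I, R/I) is generated by the collection of all type I maps φ^λ_{ab}, as ab ranges over the edges of G and λ over Λ_{ab}, together with all type II maps φ^λ_{a,L}, as a ranges over the vertices of G, L over the nonempty subsets of the vertex set of N̄(a), and λ over Γ_{a,L}. -/

import Mathlib

open MvPolynomial

noncomputable section

/-- The edge ideal of the (possibly non-simple) graph on `V` given by the
symmetric relation `E`: the ideal generated by the monomials `X a * X b`
over all pairs `(a, b)` with `E a b`. -/
def edgeIdeal (k : Type*) [Field k] {V : Type*} (E : V → V → Prop) :
    Ideal (MvPolynomial V k) :=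
  Ideal.span {m | ∃ a b, E a b ∧ m = X a * X b}

/-- The generator `X u * X v` of the edge ideal, as an element of the ideal. -/
def edgeGen (k : Type*) [Field k] {V : Type*} (E : V → V → Prop) (u v : V) (h : E u v) :
    edgeIdeal k E :=
  ⟨X u * X v, Ideal.subset_span ⟨u, v, h, rfl⟩⟩

/-- `φ : I → R/I` is a trivial first-order deformation: it lies in the image of `δ*`,
i.e. it is induced by a `k`-derivation of `R`. -/
def IsTrivialDef (k : Type*) [Field k] {V : Type*} (E : V → V → Prop)
    (φ : edgeIdeal k E →ₗ[MvPolynomial V k] MvPolynomial V k ⧸ edgeIdeal k E) : Prop :=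
  ∃ d : Derivation k (MvPolynomial V k) (MvPolynomial V k),
    ∀ f : edgeIdeal k E, φ f = Ideal.Quotient.mk (edgeIdeal k E) (d f)

/-- `R/I(G)` is rigid: `δ*` is surjective, i.e. `T¹(R/I) = 0`. -/
def RigidEdgeIdeal (k : Type*) [Field k] {V : Type*} (E : V → V → Prop) : Prop :=
  ∀ φ : edgeIdeal k E →ₗ[MvPolynomial V k] MvPolynomial V k ⧸ edgeIdeal k E,
    IsTrivialDef k E φ

open scoped Classical in
/-- The neighborhood of a vertex. -/
def nbhd {V : Type*} [Fintype V] (E : V → V → Prop) (v : V) : Finset V :=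
  Finset.univ.filter (fun w => E v w)

open scoped Classical in
/-- The set `Λ_{ab}` of squarefree monomials `√(∏_{g ∈ Λ} x_{c g})` over all choice
functions `c` with `c g ∈ Λ_g = N(g) \ {a,b}` for every `g ∈ Λ = (N(a)\{b}) ∪ (N(b)\{a})`. -/
def LambdaSet (k : Type*) [Field k] {V : Type*} [Fintype V] [DecidableEq V]
    (E : V → V → Prop) (a b : V) : Set (MvPolynomial V k) :=
  {m | ∃ c : V → V,
    (∀ g ∈ (nbhd E a).erase b ∪ (nbhd E b).erase a, c g ∈ nbhd E g \ {a, b}) ∧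
    m = ∏ v ∈ ((nbhd E a).erase b ∪ (nbhd E b).erase a).image c, X v}

/-- `φ` is the type I map `φ^λ_{ab}` : it sends the generator `x_a x_b` to `λ` and every
other minimal monomial generator of the edge ideal to `0`. -/
def IsTypeI (k : Type*) [Field k] {V : Type*} (E : V → V → Prop) (a b : V) (hab : E a b)
    (lam : MvPolynomial V k)
    (φ : edgeIdeal k E →ₗ[MvPolynomial V k] MvPolynomial V k ⧸ edgeIdeal k E) : Prop :=
  φ (edgeGen k E a b hab) = Ideal.Quotient.mk (edgeIdeal k E) lam ∧
  ∀ u v (h : E u v), X u * X v ≠ (X a * X b : MvPolynomial V k) →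
    φ (edgeGen k E u v h) = 0

open scoped Classical in
/-- `Γ(L)`: the vertices of `N̄(a)` not in `L` that are adjacent in `N̄(a)`
(the complement of the underlying simple graph induced on `N(a)`) to some vertex of `L`. -/
def GammaF {V : Type*} [Fintype V] [DecidableEq V] (E : V → V → Prop) (a : V)
    (L : Finset V) : Finset V :=
  (nbhd E a \ L).filter (fun g => ∃ u ∈ L, u ≠ g ∧ ¬ E u g)

open scoped Classical in
/-- The set `Γ_{a,L}` of squarefree monomials `√(∏_{g ∈ Γ(L)} x_{c g})` over all choice
functions `c` with `c g ∈ Γ_g = N(g) \ {a}`. -/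
def GammaSet (k : Type*) [Field k] {V : Type*} [Fintype V] [DecidableEq V]
    (E : V → V → Prop) (a : V) (L : Finset V) : Set (MvPolynomial V k) :=
  {m | ∃ c : V → V,
    (∀ g ∈ GammaF E a L, c g ∈ (nbhd E g).erase a) ∧
    m = ∏ v ∈ (GammaF E a L).image c, X v}

/-- `φ` is the type II map `φ^λ_{a,L}` : it sends the generator `x_a x_u` to `λ·x_u`
for `u ∈ L` and every other minimal monomial generator of the edge ideal to `0`. -/
def IsTypeII (k : Type*) [Field k] {V : Type*} (E : V → V → Prop) (a : V) (L : Finset V)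
    (lam : MvPolynomial V k)
    (φ : edgeIdeal k E →ₗ[MvPolynomial V k] MvPolynomial V k ⧸ edgeIdeal k E) : Prop :=
  (∀ u ∈ L, ∀ h : E a u, φ (edgeGen k E a u h) =
      Ideal.Quotient.mk (edgeIdeal k E) (lam * X u)) ∧
  ∀ u v (h : E u v), (∀ x ∈ L, X u * X v ≠ (X a * X x : MvPolynomial V k)) →
    φ (edgeGen k E u v h) = 0

namespace Statement6Aux
open Finsupp
open scoped Classical
set_option linter.unusedSectionVars false
set_option synthInstance.maxHeartbeats 1000000
set_option maxHeartbeats 1600000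
variable {k : Type*} [Field k] {V : Type*} [Fintype V] [DecidableEq V] {E : V → V → Prop}

def pdeg (u v : V) : V →₀ ℕ := Finsupp.single u 1 + Finsupp.single v 1

def Dom (E : V → V → Prop) (n : V →₀ ℕ) : Prop := ∃ u v, E u v ∧ pdeg u v ≤ n

lemma X_mul_X (u v : V) : (X u * X v : MvPolynomial V k) = monomial (pdeg u v) 1 := by
  rw [X, X, monomial_mul, one_mul]; rfl

lemma edgeIdeal_eq : edgeIdeal k E =
    Ideal.span ((fun s => monomial s (1:k)) '' {n | ∃ u v, E u v ∧ n = pdeg u v}) := by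
  unfold edgeIdeal
  congr 1
  ext m
  constructor
  · rintro ⟨a, b, hab, rfl⟩
    exact ⟨pdeg a b, ⟨a, b, hab, rfl⟩, (X_mul_X a b).symm⟩
  · rintro ⟨n, ⟨a, b, hab, rfl⟩, rfl⟩
    exact ⟨a, b, hab, (X_mul_X a b).symm⟩

lemma mem_edgeIdeal_iff {f : MvPolynomial V k} :
    f ∈ edgeIdeal k E ↔ ∀ n ∈ f.support, Dom E n := by
  rw [edgeIdeal_eq, mem_ideal_span_monomial_image]
  constructor
  · intro h n hn
    obtain ⟨s, ⟨u, v, huv, rfl⟩, hle⟩ := h n hn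
    exact ⟨u, v, huv, hle⟩
  · intro h n hn
    obtain ⟨u, v, huv, hle⟩ := h n hn
    exact ⟨pdeg u v, ⟨u, v, huv, rfl⟩, hle⟩

lemma monomial_mem_edgeIdeal {n : V →₀ ℕ} {c : k} (h : Dom E n) :
    monomial n c ∈ edgeIdeal k E := by
  rw [mem_edgeIdeal_iff]
  intro m hm
  rw [support_monomial] at hm
  split at hm
  · simp at hm
  · simp only [Finset.mem_singleton] at hm; subst hm; exact h

lemma monomial_mem_iff {n : V →₀ ℕ} {c : k} (hc : c ≠ 0) :
    monomial n c ∈ edgeIdeal k E ↔ Dom E n := by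
  refine ⟨fun h => ?_, monomial_mem_edgeIdeal⟩
  rw [mem_edgeIdeal_iff] at h
  exact h n (by rw [support_monomial, if_neg hc]; simp)

section Fn
variable (val : (V →₀ ℕ) → MvPolynomial V k ⧸ edgeIdeal k E)

def Fn (f : MvPolynomial V k) : MvPolynomial V k ⧸ edgeIdeal k E :=
  ∑ n ∈ f.support, (C (coeff n f) : MvPolynomial V k) • val n

lemma Fn_superset {f : MvPolynomial V k} {s : Finset (V →₀ ℕ)} (hs : f.support ⊆ s) :
    Fn val f = ∑ n ∈ s, (C (coeff n f) : MvPolynomial V k) • val n :=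
  Finset.sum_subset hs (fun n _ hn => by
    rw [MvPolynomial.notMem_support_iff.mp hn]; simp)

lemma Fn_add (f g : MvPolynomial V k) : Fn val (f + g) = Fn val f + Fn val g := by
  rw [Fn_superset val (f := f + g) (s := f.support ∪ g.support) (MvPolynomial.support_add),
    Fn_superset val (s := f.support ∪ g.support) Finset.subset_union_left,
    Fn_superset val (s := f.support ∪ g.support) Finset.subset_union_right,
    ← Finset.sum_add_distrib]
  refine Finset.sum_congr rfl fun n _ => ?_
  rw [coeff_add, map_add, add_smul]

lemma Fn_zero : Fn val 0 = 0 := by simp [Fn]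

lemma Fn_monomial (n : V →₀ ℕ) (c : k) : Fn val (monomial n c) = (C c : MvPolynomial V k) • val n := by
  by_cases hc : c = 0
  · subst hc; simp [Fn_zero, (monomial n).map_zero]
  · unfold Fn
    rw [support_monomial, if_neg hc, Finset.sum_singleton, coeff_monomial, if_pos rfl]

def FnHom : MvPolynomial V k →+ MvPolynomial V k ⧸ edgeIdeal k E where
  toFun := Fn val
  map_zero' := Fn_zero val
  map_add' := Fn_add val

lemma Fn_C_mul (c : k) (f : MvPolynomial V k) :
    Fn val (C c * f) = (C c : MvPolynomial V k) • Fn val f := by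
  have hsub : (C c * f).support ⊆ f.support := by
    intro n hn
    rw [MvPolynomial.mem_support_iff] at hn ⊢
    intro h0
    rw [coeff_C_mul, h0, mul_zero] at hn
    exact hn rfl
  rw [Fn_superset val hsub]
  unfold Fn
  rw [Finset.smul_sum]
  refine Finset.sum_congr rfl fun n _ => ?_
  rw [coeff_C_mul, map_mul, smul_smul]

lemma Fn_X_mul (hval : ∀ n, Dom E n → ∀ t, val (n + Finsupp.single t 1) = (X t : MvPolynomial V k) • val n)
    {f : MvPolynomial V k} (hf : f ∈ edgeIdeal k E) (t : V) :
    Fn val (X t * f) = (X t : MvPolynomial V k) • Fn val f := by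
  have hsub : (X t * f).support ⊆ f.support.image (fun n => n + Finsupp.single t 1) := by
    intro m hm
    rw [MvPolynomial.mem_support_iff, coeff_X_mul'] at hm
    split at hm
    · rename_i ht
      refine Finset.mem_image.mpr ⟨m - Finsupp.single t 1, MvPolynomial.mem_support_iff.mpr hm, ?_⟩
      rw [Finsupp.mem_support_iff] at ht
      ext v
      simp only [Finsupp.add_apply, Finsupp.tsub_apply, Finsupp.single_apply]
      by_cases hv : t = v
      · subst hv; simp only [eq_self_iff_true, if_true]; omega
      · simp [hv]
    · exact absurd rfl hm
  rw [Fn_superset val hsub,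
    Finset.sum_image (fun n _ m _ h => by exact add_right_cancel h)]
  unfold Fn
  rw [Finset.smul_sum]
  refine Finset.sum_congr rfl fun n hn => ?_
  have hdom : Dom E n := mem_edgeIdeal_iff.mp hf n hn
  have hco : coeff (n + Finsupp.single t 1) (X t * f) = coeff n f := by
    rw [add_comm, coeff_X_mul]
  rw [hco, hval n hdom t, smul_smul, smul_smul, mul_comm]

def mkHom (hval : ∀ n, Dom E n → ∀ t, val (n + Finsupp.single t 1) = (X t : MvPolynomial V k) • val n) :
    edgeIdeal k E →ₗ[MvPolynomial V k] MvPolynomial V k ⧸ edgeIdeal k E where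
  toFun x := Fn val x.1
  map_add' x y := Fn_add val x.1 y.1
  map_smul' r x := by
    simp only [RingHom.id_apply, SetLike.val_smul, smul_eq_mul]
    have key : ∀ r : MvPolynomial V k, ∀ f, f ∈ edgeIdeal k E →
        Fn val (r * f) = r • Fn val f := by
      intro r
      induction r using MvPolynomial.induction_on with
      | C c => intro f hf; rw [Fn_C_mul]
      | add p q hp hq => intro f hf; rw [add_mul, Fn_add, hp f hf, hq f hf, add_smul]
      | mul_X p t hp =>
        intro f hf
        rw [show p * X t * f = p * (X t * f) by ring, hp _ (Ideal.mul_mem_left _ _ hf),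
          Fn_X_mul val hval hf t, smul_smul, mul_comm]
    exact key r x.1 x.2

lemma mkHom_gen (hval : ∀ n, Dom E n → ∀ t, val (n + Finsupp.single t 1) = (X t : MvPolynomial V k) • val n)
    (u v : V) (h : E u v) : mkHom val hval (edgeGen k E u v h) = val (pdeg u v) := by
  show Fn val (X u * X v) = val (pdeg u v)
  rw [X_mul_X, Fn_monomial, map_one, one_smul]

end Fn

section Decomp
variable {M : Type*} [AddCommMonoid M] [Module (MvPolynomial V k) M]

lemma ext_on_gens (ψ₁ ψ₂ : edgeIdeal k E →ₗ[MvPolynomial V k] M)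
    (h : ∀ u v (huv : E u v), ψ₁ (edgeGen k E u v huv) = ψ₂ (edgeGen k E u v huv)) :
    ψ₁ = ψ₂ := by
  ext ⟨f, hf⟩
  refine Submodule.span_induction
    (p := fun f hf => ψ₁ ⟨f, hf⟩ = ψ₂ ⟨f, hf⟩) ?_ ?_ ?_ ?_ hf
  · rintro x ⟨u, v, huv, rfl⟩
    exact h u v huv
  · have h0 : (⟨0, (edgeIdeal k E).zero_mem⟩ : edgeIdeal k E) = 0 := rfl
    show ψ₁ ⟨0, (edgeIdeal k E).zero_mem⟩ = ψ₂ ⟨0, (edgeIdeal k E).zero_mem⟩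
    rw [h0, map_zero, map_zero]
  · intro x y hx hy hpx hpy
    show ψ₁ ⟨x + y, Submodule.add_mem _ hx hy⟩ = ψ₂ ⟨x + y, Submodule.add_mem _ hx hy⟩
    have heq : (⟨x + y, Submodule.add_mem _ hx hy⟩ : edgeIdeal k E) =
        (⟨x, hx⟩ : edgeIdeal k E) + ⟨y, hy⟩ := rfl
    rw [heq, map_add, map_add]
    show ψ₁ ⟨x, hx⟩ + ψ₁ ⟨y, hy⟩ = ψ₂ ⟨x, hx⟩ + ψ₂ ⟨y, hy⟩
    rw [hpx, hpy]
  · intro r x hx hpx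
    show ψ₁ ⟨r • x, Submodule.smul_mem _ r hx⟩ = ψ₂ ⟨r • x, Submodule.smul_mem _ r hx⟩
    have heq : (⟨r • x, Submodule.smul_mem _ r hx⟩ : edgeIdeal k E) =
        r • (⟨x, hx⟩ : edgeIdeal k E) := rfl
    rw [heq, map_smul, map_smul]
    show r • ψ₁ ⟨x, hx⟩ = r • ψ₂ ⟨x, hx⟩
    rw [hpx]

end Decomp

section Ext

def rep (ξ : MvPolynomial V k ⧸ edgeIdeal k E) : MvPolynomial V k :=
  (Ideal.Quotient.mk_surjective (I := edgeIdeal k E) ξ).choose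

lemma rep_spec (ξ : MvPolynomial V k ⧸ edgeIdeal k E) :
    Ideal.Quotient.mk (edgeIdeal k E) (rep ξ) = ξ :=
  (Ideal.Quotient.mk_surjective ξ).choose_spec

lemma term_mem {g : MvPolynomial V k} (hg : g ∈ edgeIdeal k E) (m : V →₀ ℕ) :
    monomial m (coeff m g) ∈ edgeIdeal k E := by
  by_cases h0 : coeff m g = 0
  · rw [h0, map_zero]; exact Submodule.zero_mem _
  · exact monomial_mem_edgeIdeal (mem_edgeIdeal_iff.mp hg m (MvPolynomial.mem_support_iff.mpr h0))

def Ext (m : V →₀ ℕ) (ξ : MvPolynomial V k ⧸ edgeIdeal k E) :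
    MvPolynomial V k ⧸ edgeIdeal k E :=
  Ideal.Quotient.mk _ (monomial m (coeff m (rep ξ)))

lemma Ext_mk (m : V →₀ ℕ) (f : MvPolynomial V k) :
    Ext m (Ideal.Quotient.mk (edgeIdeal k E) f) =
      Ideal.Quotient.mk (edgeIdeal k E) (monomial m (coeff m f)) := by
  unfold Ext
  rw [Ideal.Quotient.eq]
  have hmem : rep (Ideal.Quotient.mk (edgeIdeal k E) f) - f ∈ edgeIdeal k E := by
    rw [← Ideal.Quotient.eq, rep_spec]
  have := term_mem hmem m
  rwa [coeff_sub, map_sub] at this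

lemma smul_mk (r f : MvPolynomial V k) :
    r • (Ideal.Quotient.mk (edgeIdeal k E) f) = Ideal.Quotient.mk (edgeIdeal k E) (r * f) := by
  rw [← Ideal.Quotient.mk_eq_mk, ← Ideal.Quotient.mk_eq_mk, ← Submodule.Quotient.mk_smul]
  rfl

lemma Ext_smul_X (m : V →₀ ℕ) (t : V) (ξ : MvPolynomial V k ⧸ edgeIdeal k E) :
    Ext (m + Finsupp.single t 1) ((X t : MvPolynomial V k) • ξ) =
      (X t : MvPolynomial V k) • Ext m ξ := by
  obtain ⟨f, rfl⟩ := Ideal.Quotient.mk_surjective (I := edgeIdeal k E) ξ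
  rw [smul_mk, Ext_mk, Ext_mk, smul_mk]
  congr 1
  rw [add_comm m, coeff_X_mul, X, monomial_mul, one_mul]

lemma Ext_smul_X_zero (m : V →₀ ℕ) (t : V) (ξ : MvPolynomial V k ⧸ edgeIdeal k E)
    (hm : m t = 0) : Ext m ((X t : MvPolynomial V k) • ξ) = 0 := by
  obtain ⟨f, rfl⟩ := Ideal.Quotient.mk_surjective (I := edgeIdeal k E) ξ
  rw [smul_mk, Ext_mk, coeff_X_mul', if_neg (by simp [Finsupp.mem_support_iff, hm]),
    map_zero, map_zero]

end Ext

section ZC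

def zc (n : V →₀ ℕ) : V →₀ ℤ := n.mapRange (Nat.cast) Nat.cast_zero

lemma zc_apply (n : V →₀ ℕ) (v : V) : zc n v = (n v : ℤ) := rfl

lemma zc_add (n m : V →₀ ℕ) : zc (n + m) = zc n + zc m := by
  ext v; simp [zc_apply, Finsupp.add_apply]

lemma zc_inj : Function.Injective (zc (V := V)) := by
  intro n m h
  ext v
  have := congrArg (fun f => f v) h
  simpa [zc_apply] using this

def tn (e : V →₀ ℤ) : V →₀ ℕ := e.mapRange Int.toNat Int.toNat_zero

lemma tn_apply (e : V →₀ ℤ) (v : V) : tn e v = (e v).toNat := rfl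

lemma zc_tn {e : V →₀ ℤ} (he : 0 ≤ e) : zc (tn e) = e := by
  ext v
  have := Finsupp.le_def.mp he v
  simp only [Finsupp.coe_zero, Pi.zero_apply] at this
  simp only [zc_apply, tn_apply]
  omega

lemma tn_zc (n : V →₀ ℕ) : tn (zc n) = n := by
  ext v; simp [tn_apply, zc_apply]

lemma zc_nonneg (n : V →₀ ℕ) : 0 ≤ zc n := by
  rw [Finsupp.le_def]
  intro v
  simp [zc_apply]

end ZC

section PhiD
variable (φ : edgeIdeal k E →ₗ[MvPolynomial V k] MvPolynomial V k ⧸ edgeIdeal k E)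

def dval (d : V →₀ ℤ) : (V →₀ ℕ) → MvPolynomial V k ⧸ edgeIdeal k E := fun n =>
  if h : Dom E n ∧ 0 ≤ zc n + d then
    Ext (tn (zc n + d)) (φ ⟨monomial n 1, monomial_mem_edgeIdeal h.1⟩)
  else 0

lemma dom_add_single {n : V →₀ ℕ} (h : Dom E n) (t : V) : Dom E (n + Finsupp.single t 1) := by
  obtain ⟨u, v, huv, hle⟩ := h
  exact ⟨u, v, huv, hle.trans (le_add_of_nonneg_right zero_le)⟩

lemma dval_hval (d : V →₀ ℤ) : ∀ n, Dom E n → ∀ t,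
    dval φ d (n + Finsupp.single t 1) = (X t : MvPolynomial V k) • dval φ d n := by
  intro n hn t
  have hmono : (⟨monomial (n + Finsupp.single t 1) 1,
      monomial_mem_edgeIdeal (dom_add_single hn t)⟩ : edgeIdeal k E) =
      (X t : MvPolynomial V k) • ⟨monomial n 1, monomial_mem_edgeIdeal hn⟩ := by
    apply Subtype.ext
    show monomial (n + Finsupp.single t 1) (1:k) = X t * monomial n 1
    rw [X, monomial_mul, one_mul, add_comm]
  by_cases hpos : 0 ≤ zc n + d
  · have hpos' : 0 ≤ zc (n + Finsupp.single t 1) + d := by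
      rw [Finsupp.le_def] at hpos ⊢
      intro v
      have := hpos v
      simp only [zc_add, Finsupp.add_apply, zc_apply, Finsupp.coe_zero, Pi.zero_apply] at this ⊢
      have h2 : (0:ℤ) ≤ zc (Finsupp.single t 1) v := Finsupp.le_def.mp (zc_nonneg _) v
      omega
    have htn : tn (zc (n + Finsupp.single t 1) + d) = tn (zc n + d) + Finsupp.single t 1 := by
      ext v
      have := Finsupp.le_def.mp hpos v
      simp only [tn_apply, Finsupp.add_apply, zc_add, zc_apply, Finsupp.single_apply,
        Finsupp.coe_zero, Pi.zero_apply] at this ⊢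
      by_cases hv : t = v
      · subst hv; simp only [eq_self_iff_true, if_true] at *; omega
      · simp only [hv, if_false] at *; omega
    rw [dval, dif_pos ⟨dom_add_single hn t, hpos'⟩, dval, dif_pos ⟨hn, hpos⟩, hmono, map_smul,
      htn, Ext_smul_X]
  · by_cases hpos' : 0 ≤ zc (n + Finsupp.single t 1) + d
    · have ht0 : (tn (zc (n + Finsupp.single t 1) + d)) t = 0 := by
        have h1 : (n t : ℤ) + d t < 0 := by
          by_contra hc
          push_neg at hc
          apply hpos
          rw [Finsupp.le_def]
          intro v
          simp only [Finsupp.coe_zero, Pi.zero_apply, Finsupp.add_apply, zc_apply]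
          by_cases hv : v = t
          · subst hv; exact hc
          · have := Finsupp.le_def.mp hpos' v
            simp only [zc_add, Finsupp.add_apply, zc_apply, Finsupp.single_apply,
              Finsupp.coe_zero, Pi.zero_apply] at this
            rw [if_neg (fun h => hv h.symm)] at this
            omega
        have h2 : (zc (n + Finsupp.single t 1)) t = (n t : ℤ) + 1 := by
          simp [zc_add, Finsupp.add_apply, zc_apply, Finsupp.single_apply]
        rw [tn_apply, Finsupp.add_apply, h2]
        omega
      rw [dval, dif_pos ⟨dom_add_single hn t, hpos'⟩, hmono, map_smul, Ext_smul_X_zero _ _ _ ht0,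
        dval, dif_neg (fun hc => hpos hc.2), smul_zero]
    · rw [dval, dif_neg (fun hc => hpos' hc.2), dval, dif_neg (fun hc => hpos hc.2), smul_zero]

def phid (d : V →₀ ℤ) : edgeIdeal k E →ₗ[MvPolynomial V k] MvPolynomial V k ⧸ edgeIdeal k E :=
  mkHom (dval φ d) (dval_hval φ d)

lemma phid_gen (d : V →₀ ℤ) (u v : V) (huv : E u v) :
    phid φ d (edgeGen k E u v huv) = dval φ d (pdeg u v) :=
  mkHom_gen _ _ u v huv

lemma exists_decomp : ∃ D : Finset (V →₀ ℤ), φ = ∑ d ∈ D, phid φ d := by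
  classical
  set edges : Finset (V × V) := Finset.univ.filter (fun p : V × V => E p.1 p.2) with hedges
  have edgeprf : ∀ p ∈ edges, E p.1 p.2 := fun p hp => (Finset.mem_filter.mp hp).2
  refine ⟨edges.attach.biUnion (fun p =>
    ((rep (φ (edgeGen k E p.1.1 p.1.2 (edgeprf p.1 p.2)))).support).image
      (fun m => zc m - zc (pdeg p.1.1 p.1.2))), ?_⟩
  apply ext_on_gens
  intro u v huv
  rw [LinearMap.sum_apply]
  simp only [phid_gen]
  set D := edges.attach.biUnion (fun p =>
    ((rep (φ (edgeGen k E p.1.1 p.1.2 (edgeprf p.1 p.2)))).support).image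
      (fun m => zc m - zc (pdeg p.1.1 p.1.2))) with hD
  set ξ := φ (edgeGen k E u v huv) with hξ
  set f := rep ξ with hf
  have hsub : f.support.image (fun m => zc m - zc (pdeg u v)) ⊆ D := by
    intro d hd
    rw [hD]
    apply Finset.mem_biUnion.mpr
    refine ⟨⟨(u, v), Finset.mem_filter.mpr ⟨Finset.mem_univ _, huv⟩⟩, Finset.mem_attach _ _, hd⟩
  rw [← Finset.sum_subset hsub]
  · rw [Finset.sum_image (fun m hm m' hm' h => by
      have : zc m = zc m' := by
        have := congrArg (fun x => x + zc (pdeg u v)) h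
        simpa [sub_add_cancel] using this
      exact zc_inj this)]
    have hterm : ∀ m ∈ f.support, dval φ (zc m - zc (pdeg u v)) (pdeg u v) =
        Ideal.Quotient.mk (edgeIdeal k E) (monomial m (coeff m f)) := by
      intro m hm
      have hcond : Dom E (pdeg u v) ∧ 0 ≤ zc (pdeg u v) + (zc m - zc (pdeg u v)) := by
        constructor
        · exact ⟨u, v, huv, le_refl _⟩
        · rw [add_sub_cancel]; exact zc_nonneg m
      rw [dval, dif_pos hcond]
      have h1 : tn (zc (pdeg u v) + (zc m - zc (pdeg u v))) = m := by
        rw [add_sub_cancel, tn_zc]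
      rw [h1]
      have h2 : (⟨monomial (pdeg u v) 1, monomial_mem_edgeIdeal hcond.1⟩ : edgeIdeal k E) =
          edgeGen k E u v huv := by
        apply Subtype.ext
        show monomial (pdeg u v) (1:k) = X u * X v
        rw [X_mul_X]
      rw [h2, ← hξ]
      rfl
    rw [Finset.sum_congr rfl hterm, ← map_sum, ← MvPolynomial.as_sum, hf, rep_spec]
  · intro d hdD hdS
    rw [dval]
    split
    · rename_i hcond
      set m' := tn (zc (pdeg u v) + d) with hm'
      have hzc : zc m' = zc (pdeg u v) + d := zc_tn hcond.2
      have h2 : (⟨monomial (pdeg u v) 1, monomial_mem_edgeIdeal hcond.1⟩ : edgeIdeal k E) =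
          edgeGen k E u v huv := by
        apply Subtype.ext
        show monomial (pdeg u v) (1:k) = X u * X v
        rw [X_mul_X]
      rw [h2]
      have hco : coeff m' f = 0 := by
        by_contra hc
        apply hdS
        exact Finset.mem_image.mpr ⟨m', MvPolynomial.mem_support_iff.mpr hc,
          by rw [hzc, add_sub_cancel_left]⟩
      show Ideal.Quotient.mk (edgeIdeal k E) (monomial m' (coeff m' (rep ξ))) = 0
      rw [← hf, hco, map_zero, map_zero]
    · rfl

end PhiD

section Monos

lemma single_le_add_single {w t : V} {m : V →₀ ℕ}
    (h : Finsupp.single w 1 ≤ m + Finsupp.single t 1) (hwt : w ≠ t) :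
    Finsupp.single w 1 ≤ m := by
  rw [Finsupp.single_le_iff] at h ⊢
  simp only [Finsupp.add_apply, Finsupp.single_apply] at h
  rw [if_neg (fun hh => hwt hh.symm)] at h
  omega

lemma pdeg_apply (u v w : V) :
    pdeg u v w = (if u = w then 1 else 0) + (if v = w then 1 else 0) := by
  simp [pdeg, Finsupp.single_apply]

lemma edge_split {g h o : V} {m : V →₀ ℕ} (hle : pdeg g h ≤ m + Finsupp.single o 1)
    (hnle : ¬ pdeg g h ≤ m) :
    (g = o ∧ Finsupp.single h 1 ≤ m) ∨ (h = o ∧ Finsupp.single g 1 ≤ m) := by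
  by_cases hgo : g = o
  · subst hgo
    refine Or.inl ⟨rfl, ?_⟩
    rw [Finsupp.single_le_iff]
    have hv := Finsupp.le_def.mp hle h
    rw [pdeg_apply] at hv
    simp only [Finsupp.add_apply, Finsupp.single_apply, eq_self_iff_true, if_true] at hv
    by_cases hgh : g = h
    · simp only [hgh, eq_self_iff_true, if_true] at hv; omega
    · simp only [hgh, if_false] at hv
      by_cases hhg : h = g
      · exact absurd hhg.symm hgh
      · omega
  · have hho : h = o := by
      by_contra hc
      apply hnle
      rw [Finsupp.le_def]
      intro v
      have hv := Finsupp.le_def.mp hle v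
      rw [pdeg_apply] at hv ⊢
      simp only [Finsupp.add_apply, Finsupp.single_apply] at hv
      by_cases hov : o = v
      · have h1 : ¬ g = v := fun x => hgo (x.trans hov.symm)
        have h2 : ¬ h = v := fun x => hc (x.trans hov.symm)
        simp only [h1, h2, if_false] at *
        omega
      · simp only [hov, if_false, add_zero] at hv
        exact hv
    subst hho
    refine Or.inr ⟨rfl, ?_⟩
    rw [Finsupp.single_le_iff]
    have hv := Finsupp.le_def.mp hle g
    rw [pdeg_apply] at hv
    simp only [Finsupp.add_apply, Finsupp.single_apply, eq_self_iff_true, if_true] at hv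
    by_cases hhg : h = g
    · simp only [hhg, eq_self_iff_true, if_true] at hv; omega
    · simp only [hhg, if_false] at hv; omega

def deg2 (f : V →₀ ℕ) : ℕ := f.sum fun _ n => n

lemma deg2_le {f : V →₀ ℕ} (v : V) : f v ≤ deg2 f := by
  by_cases hv : f v = 0
  · simp [hv]
  · exact Finset.single_le_sum (fun _ _ => Nat.zero_le _) (Finsupp.mem_support_iff.mpr hv)

lemma deg2_add (f g : V →₀ ℕ) : deg2 (f + g) = deg2 f + deg2 g :=
  Finsupp.sum_add_index' (fun _ => rfl) (fun _ _ _ => rfl)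

lemma deg2_single (v : V) (n : ℕ) : deg2 (Finsupp.single v n) = n :=
  Finsupp.sum_single_index rfl

lemma deg2_eq_zero {f : V →₀ ℕ} (h : deg2 f = 0) : f = 0 := by
  ext v
  have := deg2_le (f := f) v
  simp only [Finsupp.coe_zero, Pi.zero_apply]
  omega

lemma le_pdeg_eq {a b u v : V} (h : pdeg a b ≤ pdeg u v) : pdeg a b = pdeg u v := by
  have e := tsub_add_cancel_of_le h
  have h2 : deg2 (pdeg u v - pdeg a b) = 0 := by
    have h3 := congrArg deg2 e
    rw [deg2_add] at h3
    have d1 : deg2 (pdeg a b) = 2 := by rw [pdeg, deg2_add, deg2_single, deg2_single]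
    have d2 : deg2 (pdeg u v) = 2 := by rw [pdeg, deg2_add, deg2_single, deg2_single]
    omega
  rw [← e, deg2_eq_zero h2, zero_add]

lemma XuXv_eq_iff {u v a b : V} :
    (X u * X v : MvPolynomial V k) = X a * X b ↔ pdeg u v = pdeg a b := by
  rw [X_mul_X, X_mul_X, monomial_eq_monomial_iff]
  constructor
  · rintro (⟨h, -⟩ | ⟨h, -⟩)
    · exact h
    · exact absurd h one_ne_zero
  · intro h; exact Or.inl ⟨h, rfl⟩

def qOf (s : Finset V) : V →₀ ℕ := ∑ v ∈ s, Finsupp.single v 1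

lemma prod_X_eq (s : Finset V) :
    (∏ v ∈ s, (X v : MvPolynomial V k)) = monomial (qOf s) 1 := by
  classical
  induction s using Finset.induction with
  | empty => simp [qOf]
  | insert x s' hx ih =>
    rw [Finset.prod_insert hx, ih, X, monomial_mul, one_mul]
    congr 1
    rw [qOf, qOf, Finset.sum_insert hx]

lemma qOf_apply (s : Finset V) (w : V) : qOf s w = if w ∈ s then 1 else 0 := by
  classical
  rw [qOf, Finset.sum_apply']
  simp only [Finsupp.single_apply]
  rw [Finset.sum_ite_eq' s w (fun _ => 1)]

lemma single_le_qOf {s : Finset V} {w : V} (h : w ∈ s) : Finsupp.single w 1 ≤ qOf s := by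
  rw [Finsupp.single_le_iff, qOf_apply, if_pos h]

end Monos

section TypeI
variable (a b : V)

def LamF (E : V → V → Prop) (a b : V) : Finset V := (nbhd E a).erase b ∪ (nbhd E b).erase a

def valI (q : V →₀ ℕ) : (V →₀ ℕ) → MvPolynomial V k ⧸ edgeIdeal k E := fun n =>
  if pdeg a b ≤ n then Ideal.Quotient.mk (edgeIdeal k E) (monomial (q + (n - pdeg a b)) 1)
  else 0

lemma typeI_dom (hsymm : Symmetric E) (hab : E a b) {q : V →₀ ℕ}
    (hq : ∀ g ∈ LamF E a b, ∃ w, E g w ∧ Finsupp.single w 1 ≤ q)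
    {n : V →₀ ℕ} (hn : Dom E n) (t : V) (h1 : ¬ pdeg a b ≤ n)
    (h2 : pdeg a b ≤ n + Finsupp.single t 1) :
    Dom E (q + (n + Finsupp.single t 1 - pdeg a b)) := by
  set m' := n + Finsupp.single t 1 - pdeg a b with hm'
  have hmp : m' + pdeg a b = n + Finsupp.single t 1 := tsub_add_cancel_of_le h2
  have hta : t = a ∨ t = b := by
    by_contra hc
    push_neg at hc
    apply h1
    rw [Finsupp.le_def]
    intro v
    have hv := Finsupp.le_def.mp h2 v
    simp only [Finsupp.add_apply, Finsupp.single_apply] at hv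
    by_cases htv : t = v
    · subst htv
      simp only [eq_self_iff_true, if_true] at hv
      have hz : pdeg a b t = 0 := by
        rw [pdeg_apply, if_neg (fun x => hc.1 x.symm), if_neg (fun x => hc.2 x.symm)]
      rw [hz]
      exact Nat.zero_le _
    · simp only [htv, if_false, add_zero] at hv
      exact hv
  obtain ⟨o, hpo, hoΛ⟩ : ∃ o, pdeg a b = Finsupp.single t 1 + Finsupp.single o 1 ∧
      (∀ w, E o w → w ≠ t → w ∈ LamF E a b) := by
    rcases hta with h | h
    · subst h
      refine ⟨b, rfl, fun w hw hwt => ?_⟩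
      exact Finset.mem_union_right _ (Finset.mem_erase.mpr ⟨hwt, by simp [nbhd, hw]⟩)
    · subst h
      refine ⟨a, ?_, fun w hw hwt => ?_⟩
      · show Finsupp.single a 1 + Finsupp.single t 1 = _
        exact add_comm _ _
      · exact Finset.mem_union_left _ (Finset.mem_erase.mpr ⟨hwt, by simp [nbhd, hw]⟩)
  have hno : n = m' + Finsupp.single o 1 := by
    have h3 : (m' + Finsupp.single o 1) + Finsupp.single t 1 = n + Finsupp.single t 1 := by
      rw [← hmp, hpo]
      abel
    exact (add_right_cancel h3).symm
  have hmt : m' t = 0 := by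
    by_contra hc
    apply h1
    rw [hpo, hno]
    have hst : Finsupp.single t 1 ≤ m' := Finsupp.single_le_iff.mpr (by omega)
    exact add_le_add hst le_rfl
  obtain ⟨g, h', hgh, hghle⟩ := hn
  rw [hno] at hghle
  by_cases hsmall : pdeg g h' ≤ m'
  · exact ⟨g, h', hgh, hsmall.trans (le_add_of_nonneg_left zero_le)⟩
  · obtain ⟨w, how, hwm⟩ : ∃ w, E o w ∧ Finsupp.single w 1 ≤ m' := by
      rcases edge_split hghle hsmall with ⟨hgo, hw⟩ | ⟨hho, hw⟩
      · exact ⟨h', hgo ▸ hgh, hw⟩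
      · exact ⟨g, hsymm (hho ▸ hgh), hw⟩
    have hwt : w ≠ t := by
      intro hh
      subst hh
      have := Finsupp.single_le_iff.mp hwm
      omega
    obtain ⟨w', hww', hw'q⟩ := hq w (hoΛ w how hwt)
    refine ⟨w, w', hww', ?_⟩
    rw [Finsupp.le_def]
    intro v
    have h4 := Finsupp.single_le_iff.mp hwm
    have h5 := Finsupp.single_le_iff.mp hw'q
    rw [pdeg_apply]
    simp only [Finsupp.add_apply, Finsupp.single_apply]
    by_cases hwv : w = v <;> by_cases hw'v : w' = v <;>
      simp only [hwv, hw'v, eq_self_iff_true, if_true, if_false] <;>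
      [skip; skip; skip; omega]
    · subst hwv; subst hw'v; omega
    · subst hwv; omega
    · subst hw'v; omega

lemma valI_hval (hsymm : Symmetric E) (hab : E a b) {q : V →₀ ℕ}
    (hq : ∀ g ∈ LamF E a b, ∃ w, E g w ∧ Finsupp.single w 1 ≤ q) :
    ∀ n, Dom E n → ∀ t, (valI a b q (n + Finsupp.single t 1) : MvPolynomial V k ⧸ edgeIdeal k E)
      = (X t : MvPolynomial V k) • valI a b q n := by
  intro n hn t
  by_cases h1 : pdeg a b ≤ n
  · have h2 : pdeg a b ≤ n + Finsupp.single t 1 :=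
      h1.trans (le_add_of_nonneg_right zero_le)
    rw [valI, if_pos h2, valI, if_pos h1, smul_mk]
    rw [X, monomial_mul, one_mul]
    have hexp : Finsupp.single t 1 + (q + (n - pdeg a b))
        = q + (n + Finsupp.single t 1 - pdeg a b) := by
      ext v
      have hv := Finsupp.le_def.mp h1 v
      simp only [Finsupp.add_apply, Finsupp.tsub_apply, Finsupp.single_apply]
      by_cases htv : t = v <;>
        simp only [htv, eq_self_iff_true, if_true, if_false] <;> omega
    rw [hexp]
  · by_cases h2 : pdeg a b ≤ n + Finsupp.single t 1
    · rw [valI, if_pos h2, valI, if_neg h1, smul_zero, Ideal.Quotient.eq_zero_iff_mem]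
      exact monomial_mem_edgeIdeal (typeI_dom a b hsymm hab hq hn t h1 h2)
    · rw [valI, if_neg h2, valI, if_neg h1, smul_zero]

lemma typeI_pack (hsymm : Symmetric E) (hab : E a b) (c' : V → V)
    (hc' : ∀ g ∈ LamF E a b, c' g ∈ nbhd E g \ {a, b}) :
    ∃ φ : edgeIdeal k E →ₗ[MvPolynomial V k] MvPolynomial V k ⧸ edgeIdeal k E,
      IsTypeI k E a b hab (monomial (qOf ((LamF E a b).image c')) 1) φ ∧
      (monomial (qOf ((LamF E a b).image c')) 1 : MvPolynomial V k) ∈ LambdaSet k E a b := by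
  classical
  set q := qOf ((LamF E a b).image c') with hqdef
  have hq : ∀ g ∈ LamF E a b, ∃ w, E g w ∧ Finsupp.single w 1 ≤ q := by
    intro g hg
    refine ⟨c' g, ?_, single_le_qOf (Finset.mem_image_of_mem c' hg)⟩
    have := hc' g hg
    rw [Finset.mem_sdiff] at this
    have h2 := this.1
    simp only [nbhd, Finset.mem_filter] at h2
    exact h2.2
  refine ⟨mkHom (valI a b q) (valI_hval a b hsymm hab hq), ⟨?_, ?_⟩, ?_⟩
  · rw [mkHom_gen]
    rw [valI, if_pos (le_refl _), tsub_self, add_zero]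
  · intro u v huv hne
    rw [mkHom_gen]
    rw [valI, if_neg]
    intro hle
    exact hne (XuXv_eq_iff.mpr (le_pdeg_eq hle).symm)
  · refine ⟨c', hc', ?_⟩
    rw [prod_X_eq]
    rfl

end TypeI

section TypeII
variable (a : V) (L : Finset V)

def valII (q : V →₀ ℕ) : (V →₀ ℕ) → MvPolynomial V k ⧸ edgeIdeal k E := fun n =>
  if Finsupp.single a 1 ≤ n ∧ ∃ u ∈ L, Finsupp.single u 1 ≤ n - Finsupp.single a 1 then
    Ideal.Quotient.mk (edgeIdeal k E) (monomial (q + (n - Finsupp.single a 1)) 1)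
  else 0

lemma typeII_dom (hsymm : Symmetric E) {q : V →₀ ℕ}
    (hq : ∀ g ∈ GammaF E a L, ∃ w, E g w ∧ Finsupp.single w 1 ≤ q)
    {n : V →₀ ℕ} (hn : Dom E n) (t : V)
    (h1 : ¬ (Finsupp.single a 1 ≤ n ∧ ∃ u ∈ L, Finsupp.single u 1 ≤ n - Finsupp.single a 1))
    (h2 : Finsupp.single a 1 ≤ n + Finsupp.single t 1 ∧
      ∃ u ∈ L, Finsupp.single u 1 ≤ n + Finsupp.single t 1 - Finsupp.single a 1) :
    Dom E (q + (n + Finsupp.single t 1 - Finsupp.single a 1)) := by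
  by_cases han : Finsupp.single a 1 ≤ n
  · -- case (ii)
    push_neg at h1
    have hnw := h1 han
    set n' := n - Finsupp.single a 1 with hn'
    have hnn' : n = n' + Finsupp.single a 1 := (tsub_add_cancel_of_le han).symm
    have hshift : n + Finsupp.single t 1 - Finsupp.single a 1 = n' + Finsupp.single t 1 := by
      ext v
      have hv := Finsupp.single_le_iff.mp han
      simp only [Finsupp.add_apply, Finsupp.tsub_apply, Finsupp.single_apply, hn']
      by_cases hav : a = v
      · subst hav
        by_cases hta2 : t = a <;>
          simp only [hta2, eq_self_iff_true, if_true, if_false] <;> omega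
      · by_cases htv : t = v <;>
          simp only [hav, htv, eq_self_iff_true, if_true, if_false] <;> omega
    rw [hshift]
    obtain ⟨u, huL, hu⟩ := h2.2
    rw [hshift] at hu
    have htu : t = u := by
      by_contra hc
      exact hnw u huL (single_le_add_single hu (fun x => hc x.symm))
    subst htu
    obtain ⟨g, h', hgh, hghle⟩ := hn
    rw [hnn'] at hghle
    by_cases hsmall : pdeg g h' ≤ n'
    · refine ⟨g, h', hgh, ?_⟩
      calc pdeg g h' ≤ n' := hsmall
        _ ≤ n' + Finsupp.single t 1 := le_add_of_nonneg_right zero_le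
        _ ≤ q + (n' + Finsupp.single t 1) := le_add_of_nonneg_left zero_le
    · obtain ⟨w, haw, hwn'⟩ : ∃ w, E a w ∧ Finsupp.single w 1 ≤ n' := by
        rcases edge_split hghle hsmall with ⟨hgo, hw⟩ | ⟨hho, hw⟩
        · exact ⟨h', hgo ▸ hgh, hw⟩
        · exact ⟨g, hsymm (hho ▸ hgh), hw⟩
      by_cases hwL : w ∈ L
      · exact absurd (hnw w hwL) (fun hc => hc hwn')
      · by_cases hEuw : E t w
        · refine ⟨t, w, hEuw, ?_⟩
          rw [Finsupp.le_def]
          intro v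
          have h4 := Finsupp.single_le_iff.mp hwn'
          rw [pdeg_apply]
          simp only [Finsupp.add_apply, Finsupp.single_apply]
          by_cases htv : t = v <;> by_cases hwv : w = v <;>
            simp only [htv, hwv, eq_self_iff_true, if_true, if_false]
          · subst htv; subst hwv; omega
          · subst htv; omega
          · subst hwv; omega
          · omega
        · have hwG : w ∈ GammaF E a L := by
            rw [GammaF, Finset.mem_filter, Finset.mem_sdiff]
            refine ⟨⟨by simp [nbhd, haw], hwL⟩, t, huL, ?_, hEuw⟩
            intro hc
            exact hwL (hc ▸ huL)
          obtain ⟨w', hww', hw'q⟩ := hq w hwG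
          refine ⟨w, w', hww', ?_⟩
          rw [Finsupp.le_def]
          intro v
          have h4 := Finsupp.single_le_iff.mp hwn'
          have h5 := Finsupp.single_le_iff.mp hw'q
          rw [pdeg_apply]
          simp only [Finsupp.add_apply, Finsupp.single_apply]
          by_cases hwv : w = v <;> by_cases hw'v : w' = v <;>
            simp only [hwv, hw'v, eq_self_iff_true, if_true, if_false]
          · subst hwv; subst hw'v; omega
          · subst hwv; omega
          · subst hw'v; omega
          · omega
  · -- case (i): t = a
    have hta : t = a := by
      by_contra hc
      apply han
      exact single_le_add_single h2.1 (fun x => hc x.symm)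
    subst hta
    rw [add_tsub_cancel_right]
    obtain ⟨g, h', hgh, hghle⟩ := hn
    exact ⟨g, h', hgh, hghle.trans (le_add_of_nonneg_left zero_le)⟩

lemma valII_hval (hsymm : Symmetric E) {q : V →₀ ℕ}
    (hq : ∀ g ∈ GammaF E a L, ∃ w, E g w ∧ Finsupp.single w 1 ≤ q) :
    ∀ n, Dom E n → ∀ t, (valII a L q (n + Finsupp.single t 1) : MvPolynomial V k ⧸ edgeIdeal k E)
      = (X t : MvPolynomial V k) • valII a L q n := by
  intro n hn t
  by_cases h1 : Finsupp.single a 1 ≤ n ∧ ∃ u ∈ L, Finsupp.single u 1 ≤ n - Finsupp.single a 1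
  · have h2 : Finsupp.single a 1 ≤ n + Finsupp.single t 1 ∧
        ∃ u ∈ L, Finsupp.single u 1 ≤ n + Finsupp.single t 1 - Finsupp.single a 1 := by
      obtain ⟨hp, u, huL, hu⟩ := h1
      refine ⟨hp.trans (le_add_of_nonneg_right zero_le), u, huL,
        hu.trans (tsub_le_tsub_right (le_add_of_nonneg_right zero_le) _)⟩
    rw [valII, if_pos h2, valII, if_pos h1, smul_mk]
    rw [X, monomial_mul, one_mul]
    have hexp : Finsupp.single t 1 + (q + (n - Finsupp.single a 1))
        = q + (n + Finsupp.single t 1 - Finsupp.single a 1) := by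
      ext v
      have hv := Finsupp.single_le_iff.mp h1.1
      simp only [Finsupp.add_apply, Finsupp.tsub_apply, Finsupp.single_apply]
      by_cases hav : a = v
      · subst hav
        by_cases hta2 : t = a <;>
          simp only [hta2, eq_self_iff_true, if_true, if_false] <;> omega
      · by_cases htv : t = v <;>
          simp only [hav, htv, eq_self_iff_true, if_true, if_false] <;> omega
    rw [hexp]
  · by_cases h2 : Finsupp.single a 1 ≤ n + Finsupp.single t 1 ∧
        ∃ u ∈ L, Finsupp.single u 1 ≤ n + Finsupp.single t 1 - Finsupp.single a 1
    · rw [valII, if_pos h2, valII, if_neg h1, smul_zero, Ideal.Quotient.eq_zero_iff_mem]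
      exact monomial_mem_edgeIdeal (typeII_dom a L hsymm hq hn t h1 h2)
    · rw [valII, if_neg h2, valII, if_neg h1, smul_zero]

lemma typeII_pack (hsymm : Symmetric E) (c' : V → V)
    (hc' : ∀ g ∈ GammaF E a L, c' g ∈ (nbhd E g).erase a) :
    ∃ φ : edgeIdeal k E →ₗ[MvPolynomial V k] MvPolynomial V k ⧸ edgeIdeal k E,
      IsTypeII k E a L (monomial (qOf ((GammaF E a L).image c')) 1) φ ∧
      (monomial (qOf ((GammaF E a L).image c')) 1 : MvPolynomial V k) ∈ GammaSet k E a L := by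
  classical
  set q := qOf ((GammaF E a L).image c') with hqdef
  have hq : ∀ g ∈ GammaF E a L, ∃ w, E g w ∧ Finsupp.single w 1 ≤ q := by
    intro g hg
    refine ⟨c' g, ?_, single_le_qOf (Finset.mem_image_of_mem c' hg)⟩
    have := hc' g hg
    rw [Finset.mem_erase] at this
    have h2 := this.2
    simp only [nbhd, Finset.mem_filter] at h2
    exact h2.2
  refine ⟨mkHom (valII a L q) (valII_hval a L hsymm hq), ⟨?_, ?_⟩, ?_⟩
  · intro u huL h
    rw [mkHom_gen]
    rw [valII, if_pos]
    · have hexp : pdeg a u - Finsupp.single a 1 = Finsupp.single u 1 := by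
        rw [pdeg, add_tsub_cancel_left]
      rw [hexp, show monomial q (1:k) * X u = monomial (q + Finsupp.single u 1) 1 by
        rw [X, monomial_mul, one_mul]]
    · constructor
      · show Finsupp.single a 1 ≤ pdeg a u
        exact le_add_of_nonneg_right zero_le
      · refine ⟨u, huL, ?_⟩
        show Finsupp.single u 1 ≤ pdeg a u - Finsupp.single a 1
        rw [pdeg, add_tsub_cancel_left]
  · intro u v huv hall
    rw [mkHom_gen]
    rw [valII, if_neg]
    rintro ⟨hle, x, hxL, hx⟩
    have hax : pdeg a x ≤ pdeg u v := by
      rw [pdeg]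
      rw [le_tsub_iff_left hle] at hx
      exact hx
    exact hall x hxL (XuXv_eq_iff.mpr (le_pdeg_eq hax).symm)
  · refine ⟨c', hc', ?_⟩
    rw [prod_X_eq]

end TypeII

section Cases
variable (φ : edgeIdeal k E →ₗ[MvPolynomial V k] MvPolynomial V k ⧸ edgeIdeal k E)

lemma Dom_mono {n m : V →₀ ℕ} (h : Dom E n) (hle : n ≤ m) : Dom E m := by
  obtain ⟨u, v, huv, hle'⟩ := h
  exact ⟨u, v, huv, hle'.trans hle⟩

lemma pdeg_eq_iff {u v a b : V} :
    pdeg u v = pdeg a b ↔ (u = a ∧ v = b) ∨ (u = b ∧ v = a) := by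
  constructor
  · intro h
    by_cases hua : u = a
    · subst hua
      left
      refine ⟨rfl, ?_⟩
      have h2 : Finsupp.single v 1 = Finsupp.single b (1:ℕ) := add_left_cancel (h : _ = _)
      by_contra hvb
      have := congrArg (fun f => f v) h2
      simp only [Finsupp.single_apply, eq_self_iff_true, if_true] at this
      rw [if_neg (fun x => hvb x.symm)] at this
      exact one_ne_zero this
    · have h0 := congrArg (fun f => f u) h
      simp only [pdeg_apply, eq_self_iff_true, if_true] at h0
      rw [if_neg (show ¬ a = u from fun x => hua x.symm)] at h0
      have hbu : b = u := by
        by_contra hbu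
        rw [if_neg hbu] at h0
        by_cases hvu : v = u <;> simp [hvu] at h0
      right
      refine ⟨hbu.symm, ?_⟩
      have hpb2 : pdeg a b = Finsupp.single u 1 + Finsupp.single a (1:ℕ) := by
        rw [pdeg, ← hbu, add_comm]
      have h3 : Finsupp.single u 1 + Finsupp.single v 1
          = Finsupp.single u 1 + Finsupp.single a (1:ℕ) := by
        rw [← hpb2, ← h]
        rfl
      have h4 : Finsupp.single v 1 = Finsupp.single a (1:ℕ) := add_left_cancel h3
      by_contra hva
      have := congrArg (fun f => f v) h4
      simp only [Finsupp.single_apply, eq_self_iff_true, if_true] at this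
      rw [if_neg (fun x => hva x.symm)] at this
      exact one_ne_zero this
  · rintro (⟨rfl, rfl⟩ | ⟨rfl, rfl⟩)
    · rfl
    · rw [pdeg, pdeg, add_comm]

lemma caseI (hsymm : Symmetric E) (d : V →₀ ℤ) (a b : V) (hab : E a b)
    (hcond : 0 ≤ zc (pdeg a b) + d)
    (hpa : (zc (pdeg a b) + d) a ≤ 0) (hpb : (zc (pdeg a b) + d) b ≤ 0)
    (hkill : ∀ u v, E u v → pdeg u v ≠ pdeg a b → ¬ (0 ≤ zc (pdeg u v) + d)) :
    phid φ d ∈ Submodule.span (MvPolynomial V k)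
      {ψ : edgeIdeal k E →ₗ[MvPolynomial V k] MvPolynomial V k ⧸ edgeIdeal k E |
        (∃ a b, ∃ hab : E a b, ∃ lam ∈ LambdaSet k E a b, IsTypeI k E a b hab lam ψ) ∨
        (∃ a, ∃ L : Finset V, L.Nonempty ∧ L ⊆ nbhd E a ∧
          ∃ lam ∈ GammaSet k E a L, IsTypeII k E a L lam ψ)} := by
  classical
  set p := tn (zc (pdeg a b) + d) with hp
  set cc := coeff p (rep (φ (edgeGen k E a b hab))) with hcc'
  have hval_ab : phid φ d (edgeGen k E a b hab)
      = Ideal.Quotient.mk (edgeIdeal k E) (monomial p cc) := by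
    rw [phid_gen, dval, dif_pos ⟨⟨a, b, hab, le_refl _⟩, hcond⟩]
    have h2 : (⟨monomial (pdeg a b) 1, monomial_mem_edgeIdeal ⟨a, b, hab, le_refl _⟩⟩ :
        edgeIdeal k E) = edgeGen k E a b hab := by
      apply Subtype.ext
      show monomial (pdeg a b) (1:k) = X a * X b
      rw [X_mul_X]
    rw [h2]
    rfl
  have hpa0 : p a = 0 := by
    rw [hp, tn_apply]
    omega
  have hpb0 : p b = 0 := by
    rw [hp, tn_apply]
    omega
  by_cases hne : phid φ d (edgeGen k E a b hab) = 0
  · have hzero : phid φ d = (0 : edgeIdeal k E →ₗ[MvPolynomial V k] _) := by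
      apply ext_on_gens
      intro u v huv
      rw [LinearMap.zero_apply]
      by_cases hpd : pdeg u v = pdeg a b
      · have : edgeGen k E u v huv = edgeGen k E a b hab :=
          Subtype.ext (XuXv_eq_iff.mpr hpd)
        rw [this, hne]
      · rw [phid_gen, dval, dif_neg]
        rintro ⟨-, hpos⟩
        exact hkill u v huv hpd hpos
    rw [hzero]
    exact Submodule.zero_mem _
  · have hcc : cc ≠ 0 := by
      intro h0
      apply hne
      rw [hval_ab, h0, map_zero, map_zero]
    have hDomp : ¬ Dom E p := by
      intro hdom
      apply hne
      rw [hval_ab, Ideal.Quotient.eq_zero_iff_mem]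
      exact monomial_mem_edgeIdeal hdom
    have hrelw : ∀ g ∈ LamF E a b,
        ∃ w, E g w ∧ ¬ w = a ∧ ¬ w = b ∧ Finsupp.single w 1 ≤ p := by
      intro g hg
      have hDomg : Dom E (p + Finsupp.single g 1) := by
        obtain ⟨x, y, hxy, hxg, helem, hne2⟩ :
            ∃ x y, ∃ hxy : E x y, ∃ hxg : E x g,
              (X g : MvPolynomial V k) • edgeGen k E a b hab
                = (X y : MvPolynomial V k) • edgeGen k E x g hxg ∧
              pdeg x g ≠ pdeg a b := by
          rcases Finset.mem_union.mp hg with hg1 | hg1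
          · obtain ⟨hgb, hgn⟩ := Finset.mem_erase.mp hg1
            have hEag : E a g := by
              simp only [nbhd, Finset.mem_filter] at hgn
              exact hgn.2
            refine ⟨a, b, hab, hEag, ?_, ?_⟩
            · apply Subtype.ext
              show X g * (X a * X b) = X b * (X a * X g)
              ring
            · intro hc
              rcases pdeg_eq_iff.mp hc with ⟨-, h2⟩ | ⟨h1, h2⟩
              · exact hgb h2
              · exact hgb (h2.trans h1)
          · obtain ⟨hga, hgn⟩ := Finset.mem_erase.mp hg1
            have hEbg : E b g := by
              simp only [nbhd, Finset.mem_filter] at hgn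
              exact hgn.2
            refine ⟨b, a, hsymm hab, hEbg, ?_, ?_⟩
            · apply Subtype.ext
              show X g * (X a * X b) = X a * (X b * X g)
              ring
            · intro hc
              rcases pdeg_eq_iff.mp hc with ⟨h1, h2⟩ | ⟨-, h2⟩
              · exact hga (h2.trans h1)
              · exact hga h2
        have h0 : phid φ d (edgeGen k E x g hxg) = 0 := by
          rw [phid_gen, dval, dif_neg]
          rintro ⟨-, hpos⟩
          exact hkill x g hxg hne2 hpos
        have hz : (X g : MvPolynomial V k) • phid φ d (edgeGen k E a b hab) = 0 := by
          rw [← map_smul, helem, map_smul, h0, smul_zero]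
        rw [hval_ab, smul_mk,
          show (X g : MvPolynomial V k) * monomial p cc
            = monomial (Finsupp.single g 1 + p) cc by rw [X, monomial_mul, one_mul],
          Ideal.Quotient.eq_zero_iff_mem, monomial_mem_iff hcc] at hz
        rwa [add_comm] at hz
      obtain ⟨g1, h1, hE1, hle1⟩ := hDomg
      have hnsmall : ¬ pdeg g1 h1 ≤ p := fun hc => hDomp ⟨g1, h1, hE1, hc⟩
      obtain ⟨w, hEgw, hwp⟩ : ∃ w, E g w ∧ Finsupp.single w 1 ≤ p := by
        rcases edge_split hle1 hnsmall with ⟨hgo, hw⟩ | ⟨hho, hw⟩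
        · exact ⟨h1, hgo ▸ hE1, hw⟩
        · exact ⟨g1, hsymm (hho ▸ hE1), hw⟩
      have h1w := Finsupp.single_le_iff.mp hwp
      refine ⟨w, hEgw, ?_, ?_, hwp⟩
      · intro hwa; rw [hwa] at h1w; omega
      · intro hwb; rw [hwb] at h1w; omega
    set c' : V → V := fun g => if hg : g ∈ LamF E a b then (hrelw g hg).choose else g
      with hc'def
    have hc' : ∀ g ∈ LamF E a b, c' g ∈ nbhd E g \ {a, b} := by
      intro g hg
      have hspec := (hrelw g hg).choose_spec
      rw [hc'def]
      simp only [dif_pos hg]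
      rw [Finset.mem_sdiff]
      constructor
      · simp only [nbhd, Finset.mem_filter]
        exact ⟨Finset.mem_univ _, hspec.1⟩
      · intro hmem
        rcases Finset.mem_insert.mp hmem with h | h
        · exact hspec.2.1 h
        · exact hspec.2.2.1 (Finset.mem_singleton.mp h)
    obtain ⟨φI, hTypeI, hLam⟩ := typeI_pack (k := k) a b hsymm hab c' hc'
    set q := qOf ((LamF E a b).image c') with hq
    have hqp : q ≤ p := by
      rw [Finsupp.le_def]
      intro v
      rw [hq, qOf_apply]
      split
      · rename_i hv
        obtain ⟨g, hg, hgv⟩ := Finset.mem_image.mp hv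
        have hspec := (hrelw g hg).choose_spec
        have : c' g = (hrelw g hg).choose := by rw [hc'def]; simp only [dif_pos hg]
        rw [this] at hgv
        have := Finsupp.single_le_iff.mp hspec.2.2.2
        rw [hgv] at this
        omega
      · exact Nat.zero_le _
    have heq : phid φ d = (monomial (p - q) cc : MvPolynomial V k) • φI := by
      apply ext_on_gens
      intro u v huv
      rw [LinearMap.smul_apply]
      by_cases hpd : pdeg u v = pdeg a b
      · have hguv : edgeGen k E u v huv = edgeGen k E a b hab :=
          Subtype.ext (XuXv_eq_iff.mpr hpd)
        rw [hguv, hval_ab, hTypeI.1, smul_mk, monomial_mul, mul_one,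
          tsub_add_cancel_of_le hqp]
      · rw [hTypeI.2 u v huv (fun hc => hpd (XuXv_eq_iff.mp hc)), smul_zero,
          phid_gen, dval, dif_neg]
        rintro ⟨-, hpos⟩
        exact hkill u v huv hpd hpos
    rw [heq]
    exact Submodule.smul_mem _ _ (Submodule.subset_span
      (Or.inl ⟨a, b, hab, _, hLam, hTypeI⟩))

lemma caseII (hsymm : Symmetric E) (d : V →₀ ℤ) (a : V)
    (hda : d a = -1) (hnn : ∀ v, v ≠ a → 0 ≤ d v) :
    phid φ d ∈ Submodule.span (MvPolynomial V k)
      {ψ : edgeIdeal k E →ₗ[MvPolynomial V k] MvPolynomial V k ⧸ edgeIdeal k E |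
        (∃ a b, ∃ hab : E a b, ∃ lam ∈ LambdaSet k E a b, IsTypeI k E a b hab lam ψ) ∨
        (∃ a, ∃ L : Finset V, L.Nonempty ∧ L ⊆ nbhd E a ∧
          ∃ lam ∈ GammaSet k E a L, IsTypeII k E a L lam ψ)} := by
  classical
  set p := tn (Finsupp.single a (1:ℤ) + d) with hp
  have hpa0 : p a = 0 := by
    rw [hp, tn_apply]
    simp only [Finsupp.add_apply, Finsupp.single_apply, eq_self_iff_true, if_true, hda]
    rfl
  have hposau : ∀ u, 0 ≤ zc (pdeg a u) + d := by
    intro u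
    rw [Finsupp.le_def]
    intro v
    simp only [Finsupp.add_apply, zc_apply, Finsupp.coe_zero, Pi.zero_apply, pdeg_apply]
    by_cases hav : a = v
    · subst hav
      simp only [eq_self_iff_true, if_true]
      rw [hda]
      by_cases huv : u = a <;> simp [huv]
    · have := hnn v (fun x => hav x.symm)
      by_cases huv : u = v <;> simp only [hav, huv, eq_self_iff_true, if_true, if_false] <;> omega
  have htnu : ∀ u, tn (zc (pdeg a u) + d) = p + Finsupp.single u 1 := by
    intro u
    ext v
    simp only [tn_apply, Finsupp.add_apply, zc_apply, Finsupp.single_apply, hp, pdeg_apply]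
    by_cases hav : a = v
    · subst hav
      rw [hda]
      by_cases huv : u = a <;>
        simp only [huv, eq_self_iff_true, if_true, if_false] <;> rfl
    · have h2 := hnn v (fun x => hav x.symm)
      by_cases huv : u = v <;>
        simp only [hav, huv, eq_self_iff_true, if_true, if_false] <;> omega
  set cI : V → k := fun u =>
    if hu : E a u then coeff (p + Finsupp.single u 1) (rep (φ (edgeGen k E a u hu))) else 0
    with hcI
  have hval_au : ∀ u (hu : E a u), phid φ d (edgeGen k E a u hu)
      = Ideal.Quotient.mk (edgeIdeal k E) (monomial (p + Finsupp.single u 1) (cI u)) := by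
    intro u hu
    rw [phid_gen, dval, dif_pos ⟨⟨a, u, hu, le_refl _⟩, hposau u⟩]
    have h2 : (⟨monomial (pdeg a u) 1, monomial_mem_edgeIdeal ⟨a, u, hu, le_refl _⟩⟩ :
        edgeIdeal k E) = edgeGen k E a u hu := by
      apply Subtype.ext
      show monomial (pdeg a u) (1:k) = X a * X u
      rw [X_mul_X]
    rw [h2, htnu u]
    show _ = Ideal.Quotient.mk (edgeIdeal k E) (monomial (p + Finsupp.single u 1) (cI u))
    rw [hcI]
    simp only [dif_pos hu]
    rfl
  have hkill2 : ∀ u v (huv : E u v), u ≠ a → v ≠ a →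
      phid φ d (edgeGen k E u v huv) = 0 := by
    intro u v huv hua hva
    rw [phid_gen, dval, dif_neg]
    rintro ⟨-, hpos⟩
    have h3 := Finsupp.le_def.mp hpos a
    simp only [Finsupp.add_apply, zc_apply, Finsupp.coe_zero, Pi.zero_apply, pdeg_apply,
      hda] at h3
    rw [if_neg hua, if_neg hva] at h3
    omega
  have hgen_a : ∀ u v (huv : E u v), u = a ∨ v = a →
      ∃ w, ∃ hw : E a w, edgeGen k E u v huv = edgeGen k E a w hw := by
    intro u v huv h
    rcases h with rfl | rfl
    · exact ⟨v, huv, rfl⟩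
    · exact ⟨u, hsymm huv, Subtype.ext (mul_comm _ _)⟩
  set L : Finset V := Finset.univ.filter
    (fun u => E a u ∧ cI u ≠ 0 ∧ ¬ Dom E (p + Finsupp.single u 1)) with hL
  have hLmem : ∀ u, u ∈ L ↔ E a u ∧ cI u ≠ 0 ∧ ¬ Dom E (p + Finsupp.single u 1) := by
    intro u
    rw [hL, Finset.mem_filter]
    simp
  have hLzero : ∀ u (hu : E a u), u ∉ L → phid φ d (edgeGen k E a u hu) = 0 := by
    intro u hu huL
    rw [hval_au u hu, Ideal.Quotient.eq_zero_iff_mem]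
    by_cases hcz : cI u = 0
    · rw [hcz, map_zero]
      exact Submodule.zero_mem _
    · have hdom : Dom E (p + Finsupp.single u 1) := by
        by_contra hdd
        exact huL ((hLmem u).mpr ⟨hu, hcz, hdd⟩)
      exact monomial_mem_edgeIdeal hdom
  by_cases hLne : L.Nonempty
  · obtain ⟨u₀, hu₀⟩ := hLne
    have hDomp : ¬ Dom E p := by
      intro hdd
      exact ((hLmem u₀).mp hu₀).2.2 (Dom_mono hdd (le_add_of_nonneg_right zero_le))
    set T : Finset k := L.image cI with hT
    have hrelw : ∀ γ ∈ T, ∀ g ∈ GammaF E a (L.filter (fun u => cI u = γ)),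
        ∃ w, E g w ∧ ¬ w = a ∧ Finsupp.single w 1 ≤ p := by
      intro γ hγ g hgG
      rw [GammaF, Finset.mem_filter, Finset.mem_sdiff] at hgG
      obtain ⟨⟨hgnb, hgnLγ⟩, u, huLγ, hug, hnEug⟩ := hgG
      rw [Finset.mem_filter] at huLγ
      obtain ⟨huL, hcu⟩ := huLγ
      have hEag : E a g := by
        simp only [nbhd, Finset.mem_filter] at hgnb
        exact hgnb.2
      have hEau : E a u := ((hLmem u).mp huL).1
      have hcu0 : cI u ≠ 0 := ((hLmem u).mp huL).2.1
      have hnDu : ¬ Dom E (p + Finsupp.single u 1) := ((hLmem u).mp huL).2.2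
      have hsyzD : cI u ≠ cI g →
          Dom E (p + Finsupp.single u 1 + Finsupp.single g 1) := by
        intro hne2
        have helem : (X g : MvPolynomial V k) • edgeGen k E a u hEau
            = (X u : MvPolynomial V k) • edgeGen k E a g hEag := by
          apply Subtype.ext
          show X g * (X a * X u) = X u * (X a * X g)
          ring
        have h1 : (X g : MvPolynomial V k) • phid φ d (edgeGen k E a u hEau)
            = (X u : MvPolynomial V k) • phid φ d (edgeGen k E a g hEag) := by
          rw [← map_smul, helem, map_smul]
        rw [hval_au u hEau, hval_au g hEag, smul_mk, smul_mk,
          show (X g : MvPolynomial V k) * monomial (p + Finsupp.single u 1) (cI u)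
            = monomial (Finsupp.single g 1 + (p + Finsupp.single u 1)) (cI u) by
              rw [X, monomial_mul, one_mul],
          show (X u : MvPolynomial V k) * monomial (p + Finsupp.single g 1) (cI g)
            = monomial (Finsupp.single u 1 + (p + Finsupp.single g 1)) (cI g) by
              rw [X, monomial_mul, one_mul]] at h1
        have hexp : Finsupp.single u 1 + (p + Finsupp.single g 1)
            = Finsupp.single g 1 + (p + Finsupp.single u 1) := by abel
        rw [hexp] at h1
        have hsub := Ideal.Quotient.eq.mp h1
        rw [← map_sub] at hsub
        have hDom := (monomial_mem_iff (sub_ne_zero.mpr hne2)).mp hsub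
        have : Finsupp.single g 1 + (p + Finsupp.single u 1)
            = p + Finsupp.single u 1 + Finsupp.single g 1 := by abel
        rwa [this] at hDom
      have hexw : Dom E (p + Finsupp.single u 1 + Finsupp.single g 1) →
          ∃ w, E g w ∧ ¬ w = a ∧ Finsupp.single w 1 ≤ p := by
        intro hD
        obtain ⟨g1, h1, hE1, hle1⟩ := hD
        have hns : ¬ pdeg g1 h1 ≤ p + Finsupp.single u 1 := fun hc => hnDu ⟨g1, h1, hE1, hc⟩
        obtain ⟨w, hEgw, hw⟩ : ∃ w, E g w ∧ Finsupp.single w 1 ≤ p + Finsupp.single u 1 := by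
          rcases edge_split hle1 hns with ⟨ho, hw⟩ | ⟨ho, hw⟩
          · exact ⟨h1, ho ▸ hE1, hw⟩
          · exact ⟨g1, hsymm (ho ▸ hE1), hw⟩
        have hwu : w ≠ u := by
          intro h
          exact hnEug (hsymm (h ▸ hEgw))
        have hwp : Finsupp.single w 1 ≤ p := single_le_add_single hw hwu
        have h1w := Finsupp.single_le_iff.mp hwp
        refine ⟨w, hEgw, ?_, hwp⟩
        intro hwa
        rw [hwa] at h1w
        omega
      by_cases hgL : g ∈ L
      · have hcg : cI g ≠ γ := fun h => hgnLγ (Finset.mem_filter.mpr ⟨hgL, h⟩)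
        exact hexw (hsyzD (fun h => hcg (h ▸ hcu)))
      · by_cases hDg : Dom E (p + Finsupp.single g 1)
        · obtain ⟨g1, h1, hE1, hle1⟩ := hDg
          have hns : ¬ pdeg g1 h1 ≤ p := fun hc => hDomp ⟨g1, h1, hE1, hc⟩
          obtain ⟨w, hEgw, hw⟩ : ∃ w, E g w ∧ Finsupp.single w 1 ≤ p := by
            rcases edge_split hle1 hns with ⟨ho, hw⟩ | ⟨ho, hw⟩
            · exact ⟨h1, ho ▸ hE1, hw⟩
            · exact ⟨g1, hsymm (ho ▸ hE1), hw⟩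
          have h1w := Finsupp.single_le_iff.mp hw
          refine ⟨w, hEgw, ?_, hw⟩
          intro hwa
          rw [hwa] at h1w
          omega
        · have hcg0 : cI g = 0 := by
            by_contra hc
            exact hgL ((hLmem g).mpr ⟨hEag, hc, hDg⟩)
          exact hexw (hsyzD (by rw [hcg0]; exact hcu0))
    have hpack : ∀ γ ∈ T, ∃ (qq : V →₀ ℕ)
        (ψ : edgeIdeal k E →ₗ[MvPolynomial V k] MvPolynomial V k ⧸ edgeIdeal k E),
        qq ≤ p ∧ IsTypeII k E a (L.filter (fun u => cI u = γ)) (monomial qq 1) ψ ∧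
        (monomial qq 1 : MvPolynomial V k) ∈ GammaSet k E a (L.filter (fun u => cI u = γ)) := by
      intro γ hγ
      set Lγ := L.filter (fun u => cI u = γ) with hLγ
      set c' : V → V := fun g => if hg : g ∈ GammaF E a Lγ then (hrelw γ hγ g hg).choose else g
        with hc'def
      have hc' : ∀ g ∈ GammaF E a Lγ, c' g ∈ (nbhd E g).erase a := by
        intro g hg
        have hspec := (hrelw γ hγ g hg).choose_spec
        rw [hc'def]
        simp only [dif_pos hg]
        rw [Finset.mem_erase]
        refine ⟨hspec.2.1, ?_⟩
        simp only [nbhd, Finset.mem_filter]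
        exact ⟨Finset.mem_univ _, hspec.1⟩
      obtain ⟨ψ, hII, hmem⟩ := typeII_pack (k := k) a Lγ hsymm c' hc'
      refine ⟨qOf ((GammaF E a Lγ).image c'), ψ, ?_, hII, hmem⟩
      rw [Finsupp.le_def]
      intro v
      rw [qOf_apply]
      split
      · rename_i hv
        obtain ⟨g, hg, hgv⟩ := Finset.mem_image.mp hv
        have hspec := (hrelw γ hγ g hg).choose_spec
        have hcg : c' g = (hrelw γ hγ g hg).choose := by
          rw [hc'def]
          simp only [dif_pos hg]
        rw [hcg] at hgv
        have := Finsupp.single_le_iff.mp hspec.2.2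
        rw [hgv] at this
        omega
      · exact Nat.zero_le _
    choose fq fψ hqle hII hGam using hpack
    have hLγzero : ∀ (γ : k) (hγ : γ ∈ T) (u : V) (hu : E a u),
        u ∉ L.filter (fun x => cI x = γ) →
        fψ γ hγ (edgeGen k E a u hu) = 0 := by
      intro γ hγ u hu huLγ
      refine (hII γ hγ).2 a u hu ?_
      intro x hx hXeq
      rcases pdeg_eq_iff.mp (XuXv_eq_iff.mp hXeq) with ⟨-, h2⟩ | ⟨h1, h2⟩
      · exact huLγ (h2.symm ▸ hx)
      · exact huLγ ((h2.trans h1).symm ▸ hx)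
    have heq : phid φ d = ∑ γ ∈ T.attach,
        (monomial (p - fq γ.1 γ.2) γ.1 : MvPolynomial V k) • fψ γ.1 γ.2 := by
      apply ext_on_gens
      intro u v huv
      rw [LinearMap.sum_apply]
      by_cases ha : u = a ∨ v = a
      · obtain ⟨w, hw, hEw⟩ := hgen_a u v huv ha
        rw [hEw]
        by_cases hwL : w ∈ L
        · set γ0 := cI w with hγ0
          have hγ0T : γ0 ∈ T := Finset.mem_image_of_mem cI hwL
          rw [Finset.sum_eq_single_of_mem (⟨γ0, hγ0T⟩ : {x // x ∈ T})
            (Finset.mem_attach _ _)]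
          · have hwLγ : w ∈ L.filter (fun x => cI x = γ0) :=
              Finset.mem_filter.mpr ⟨hwL, rfl⟩
            rw [LinearMap.smul_apply, (hII γ0 hγ0T).1 w hwLγ hw, hval_au w hw, smul_mk,
              show (monomial (fq γ0 hγ0T) 1 : MvPolynomial V k) * X w
                = monomial (fq γ0 hγ0T + Finsupp.single w 1) 1 by
                  rw [X, monomial_mul, one_mul],
              monomial_mul, mul_one]
            congr 1
            rw [← add_assoc, tsub_add_cancel_of_le (hqle γ0 hγ0T)]
          · intro γ' _hm hγ'
            rw [LinearMap.smul_apply]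
            have : fψ γ'.1 γ'.2 (edgeGen k E a w hw) = 0 := by
              apply hLγzero γ'.1 γ'.2 w hw
              intro hmem
              apply hγ'
              have := (Finset.mem_filter.mp hmem).2
              apply Subtype.ext
              show (γ' : k) = cI w
              exact this.symm
            rw [this, smul_zero]
        · rw [hLzero w hw hwL]
          symm
          apply Finset.sum_eq_zero
          intro γ' _hm
          rw [LinearMap.smul_apply,
            hLγzero γ'.1 γ'.2 w hw (fun hmem => hwL (Finset.mem_filter.mp hmem).1), smul_zero]
      · push_neg at ha
        rw [hkill2 u v huv ha.1 ha.2]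
        symm
        apply Finset.sum_eq_zero
        intro γ' _hm
        rw [LinearMap.smul_apply]
        have : fψ γ'.1 γ'.2 (edgeGen k E u v huv) = 0 := by
          refine (hII γ'.1 γ'.2).2 u v huv ?_
          intro x hx hXeq
          rcases pdeg_eq_iff.mp (XuXv_eq_iff.mp hXeq) with ⟨h1, -⟩ | ⟨-, h2⟩
          · exact ha.1 h1
          · exact ha.2 h2
        rw [this, smul_zero]
    rw [heq]
    apply Submodule.sum_mem
    intro γ' _hm
    apply Submodule.smul_mem
    apply Submodule.subset_span
    right
    refine ⟨a, L.filter (fun u => cI u = γ'.1), ?_, ?_, monomial (fq γ'.1 γ'.2) 1,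
      hGam γ'.1 γ'.2, hII γ'.1 γ'.2⟩
    · obtain ⟨u, huL, hcu⟩ := Finset.mem_image.mp γ'.2
      exact ⟨u, Finset.mem_filter.mpr ⟨huL, hcu⟩⟩
    · intro x hx
      have := ((hLmem x).mp (Finset.mem_filter.mp hx).1).1
      simp only [nbhd, Finset.mem_filter]
      exact ⟨Finset.mem_univ _, this⟩
  · have hzero : phid φ d = 0 := by
      apply ext_on_gens
      intro u v huv
      rw [LinearMap.zero_apply]
      by_cases ha : u = a ∨ v = a
      · obtain ⟨w, hw, hEw⟩ := hgen_a u v huv ha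
        rw [hEw]
        exact hLzero w hw (fun hmem => hLne ⟨w, hmem⟩)
      · push_neg at ha
        exact hkill2 u v huv ha.1 ha.2
    rw [hzero]
    exact Submodule.zero_mem _

lemma Ext_def (m : V →₀ ℕ) (ξ : MvPolynomial V k ⧸ edgeIdeal k E) :
    Ext m ξ = Ideal.Quotient.mk (edgeIdeal k E) (monomial m (coeff m (rep ξ))) := rfl

lemma phid_mem (hsymm : Symmetric E)
    (φ : edgeIdeal k E →ₗ[MvPolynomial V k] MvPolynomial V k ⧸ edgeIdeal k E)
    (d : V →₀ ℤ) :
    phid φ d ∈ Submodule.span (MvPolynomial V k)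
      {ψ : edgeIdeal k E →ₗ[MvPolynomial V k] MvPolynomial V k ⧸ edgeIdeal k E |
        (∃ a b, ∃ hab : E a b, ∃ lam ∈ LambdaSet k E a b, IsTypeI k E a b hab lam ψ) ∨
        (∃ a, ∃ L : Finset V, L.Nonempty ∧ L ⊆ nbhd E a ∧
          ∃ lam ∈ GammaSet k E a L, IsTypeII k E a L lam ψ)} := by
  classical
  by_cases hz : ∀ u v (huv : E u v), phid φ d (edgeGen k E u v huv) = 0
  · have hzero : phid φ d = 0 := by
      apply ext_on_gens
      intro u v huv
      rw [LinearMap.zero_apply]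
      exact hz u v huv
    rw [hzero]
    exact Submodule.zero_mem _
  · push_neg at hz
    obtain ⟨a, b, hab, hne⟩ := hz
    have hcond : 0 ≤ zc (pdeg a b) + d := by
      by_contra hc
      apply hne
      rw [phid_gen, dval, dif_neg]
      rintro ⟨-, h⟩
      exact hc h
    have hbound : ∀ v, 0 ≤ (pdeg a b v : ℤ) + d v := by
      intro v
      have := Finsupp.le_def.mp hcond v
      simpa [zc_apply, Finsupp.add_apply, Finsupp.coe_zero, Pi.zero_apply] using this
    have hnn' : ∀ v, v ≠ a → v ≠ b → 0 ≤ d v := by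
      intro v hva hvb
      have := hbound v
      rw [pdeg_apply, if_neg (fun x => hva x.symm), if_neg (fun x => hvb x.symm)] at this
      simpa using this
    have hneg : d a < 0 ∨ d b < 0 := by
      by_contra hc
      push_neg at hc
      have hdnn : ∀ v, 0 ≤ d v := by
        intro v
        by_cases hva : v = a
        · exact hva ▸ hc.1
        · by_cases hvb : v = b
          · exact hvb ▸ hc.2
          · exact hnn' v hva hvb
      apply hne
      rw [phid_gen, dval, dif_pos ⟨⟨a, b, hab, le_refl _⟩, hcond⟩, Ext_def,
        Ideal.Quotient.eq_zero_iff_mem]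
      apply monomial_mem_edgeIdeal
      refine ⟨a, b, hab, ?_⟩
      rw [Finsupp.le_def]
      intro v
      rw [tn_apply]
      have h1 := hdnn v
      simp only [Finsupp.add_apply, zc_apply]
      omega
    by_cases hab' : a = b
    · subst hab'
      have hda : d a < 0 := by rcases hneg with h | h <;> exact h
      have hb2 : 0 ≤ (2:ℤ) + d a := by
        have := hbound a
        rw [pdeg_apply, if_pos rfl] at this
        simpa using this
      by_cases h1 : d a = -1
      · exact caseII φ hsymm d a h1 (fun v hv => hnn' v hv hv)
      · have h2 : d a = -2 := by omega
        apply caseI φ hsymm d a a hab hcond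
        · simp only [Finsupp.add_apply, zc_apply, pdeg_apply, eq_self_iff_true, if_true, h2]
          omega
        · simp only [Finsupp.add_apply, zc_apply, pdeg_apply, eq_self_iff_true, if_true, h2]
          omega
        · intro u v huv hpd hpos
          apply hpd
          have h3 := Finsupp.le_def.mp hpos a
          simp only [Finsupp.add_apply, zc_apply, Finsupp.coe_zero, Pi.zero_apply,
            pdeg_apply, h2] at h3
          have hua : u = a := by
            by_contra hu
            rw [if_neg hu] at h3
            by_cases hv : v = a <;> simp only [hv, if_true, if_false, eq_self_iff_true] at h3 <;> omega
          have hva : v = a := by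
            by_contra hv
            rw [if_neg hv] at h3
            by_cases hu : u = a <;> simp only [hu, if_true, if_false, eq_self_iff_true] at h3 <;> omega
          rw [hua, hva]
    · by_cases hda : d a < 0 <;> by_cases hdb : d b < 0
      · -- both negative: type I
        have hba : (pdeg a b) a = 1 := by
          rw [pdeg_apply, if_pos rfl, if_neg (fun x => hab' x.symm)]
        have hbb : (pdeg a b) b = 1 := by
          rw [pdeg_apply, if_neg hab', if_pos rfl]
        have hda1 : d a = -1 := by have := hbound a; rw [hba] at this; omega
        have hdb1 : d b = -1 := by have := hbound b; rw [hbb] at this; omega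
        apply caseI φ hsymm d a b hab hcond
        · simp only [Finsupp.add_apply, zc_apply, hba, hda1]; omega
        · simp only [Finsupp.add_apply, zc_apply, hbb, hdb1]; omega
        · intro u v huv hpd hpos
          apply hpd
          have h3 := Finsupp.le_def.mp hpos a
          have h4 := Finsupp.le_def.mp hpos b
          simp only [Finsupp.add_apply, zc_apply, Finsupp.coe_zero, Pi.zero_apply,
            pdeg_apply, hda1, hdb1] at h3 h4
          have hmema : u = a ∨ v = a := by
            by_contra hcc
            push_neg at hcc
            rw [if_neg hcc.1, if_neg hcc.2] at h3
            omega
          have hmemb : u = b ∨ v = b := by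
            by_contra hcc
            push_neg at hcc
            rw [if_neg hcc.1, if_neg hcc.2] at h4
            omega
          rw [pdeg_eq_iff]
          rcases hmema with rfl | rfl
          · rcases hmemb with h | h
            · exact absurd h hab'
            · exact Or.inl ⟨rfl, h⟩
          · rcases hmemb with h | h
            · exact Or.inr ⟨h, rfl⟩
            · exact absurd h hab'
      · -- only a negative: type II at a
        have hba : (pdeg a b) a = 1 := by
          rw [pdeg_apply, if_pos rfl, if_neg (fun x => hab' x.symm)]
        have hda1 : d a = -1 := by have := hbound a; rw [hba] at this; omega
        refine caseII φ hsymm d a hda1 ?_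
        intro v hv
        by_cases hvb : v = b
        · subst hvb; omega
        · exact hnn' v hv hvb
      · -- only b negative: type II at b
        have hbb : (pdeg a b) b = 1 := by
          rw [pdeg_apply, if_neg hab', if_pos rfl]
        have hdb1 : d b = -1 := by have := hbound b; rw [hbb] at this; omega
        refine caseII φ hsymm d b hdb1 ?_
        intro v hv
        by_cases hva : v = a
        · subst hva; omega
        · exact hnn' v hva hv
      · rcases hneg with h | h
        · exact absurd h hda
        · exact absurd h hdb

end Cases

end Statement6Aux

/-- `Hom_R(I, R/I)` is generated, as an `R`-module, by the type I maps
`φ^λ_{ab}` (over all edges `ab` and `λ ∈ Λ_{ab}`) together with the type II maps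
`φ^λ_{a,L}` (over all vertices `a`, nonempty `L ⊆ N(a)` and `λ ∈ Γ_{a,L}`). -/
theorem statement6 {k : Type*} [Field k] {V : Type*} [Fintype V] [DecidableEq V]
    (E : V → V → Prop) (hsymm : Symmetric E) :
    Submodule.span (MvPolynomial V k)
      {φ : edgeIdeal k E →ₗ[MvPolynomial V k] MvPolynomial V k ⧸ edgeIdeal k E |
        (∃ a b, ∃ hab : E a b, ∃ lam ∈ LambdaSet k E a b, IsTypeI k E a b hab lam φ) ∨
        (∃ a, ∃ L : Finset V, L.Nonempty ∧ L ⊆ nbhd E a ∧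
          ∃ lam ∈ GammaSet k E a L, IsTypeII k E a L lam φ)} = ⊤ := by
  classical
  rw [Submodule.eq_top_iff']
  intro φ
  obtain ⟨D, hD⟩ := Statement6Aux.exists_decomp φ
  rw [hD]
  apply Submodule.sum_mem
  intro d _
  exact Statement6Aux.phid_mem hsymm φ d

end
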